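/- arXiv:2204.06793 — 2 statements merged into one kernel-verified Lean document; each statement's English description precedes it below -/
import Mathlib

section
/- Let ν be a unimodal Lévy density (radial with almost decreasing profile: there exists c ≥ 1 such that ν(r) ≤ c ν(s) whenever 0 < s ≤ r) and let Ω ⊂ ℝ^d be open, bounded, with Ω ⊂ B_{R/2}(0) for some R ≥ 1 with ν(R) ≠ 0. If a measurable function u : ℝ^d → ℝ satisfies E(u,u) = (1/2)∬_{(Ω^c×Ω^c)^c}(u(x)−u(y))² ν(x−y) dx dy < ∞, then u|_Ω ∈ L²(Ω). -/
open MeasureTheory Set Metric ENNReal NNReal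

/-!
Points of `Ω ⊆ B_{R/2}(0)` are less than `R` apart, so almost monotonicity of the profile gives
`ν (x - y) ≥ f R / c > 0` for `x ≠ y` in `Ω` (on the diagonal the integrand vanishes anyway).
Hence `∬_{Ω × Ω} (u x - u y)² < ∞`, and by Tonelli some slice `y ↦ (u x₀ - u y)²` is integrable
on `Ω`. As `Ω` has finite measure, `u = u x₀ - (u x₀ - u)` is then in `L²(Ω)`.
-/

section SquareIntegrability

variable {α : Type*} [MeasurableSpace α] {μ : Measure α}

theorem memLp_two_of_lintegral_sq_sub_lt_top [IsFiniteMeasure μ] {u : α → ℝ} (hu : Measurable u)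
    (a : ℝ) (h : ∫⁻ y, ENNReal.ofReal ((a - u y) ^ 2) ∂μ < ⊤) : MemLp u 2 μ := by
  have hdev : MemLp (fun y => a - u y) 2 μ := by
    refine (memLp_two_iff_integrable_sq (measurable_const.sub hu).aestronglyMeasurable).2
      ⟨((measurable_const.sub hu).pow_const 2).aestronglyMeasurable, ?_⟩
    rwa [hasFiniteIntegral_iff_ofReal (ae_of_all _ fun y => sq_nonneg _)]
  convert (memLp_const a).sub hdev using 1
  ext y
  simp

theorem exists_lintegral_sq_sub_lt_top [SFinite μ] [NeZero μ] {u : α → ℝ} (hu : Measurable u)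
    (h : ∫⁻ p, ENNReal.ofReal ((u p.1 - u p.2) ^ 2) ∂μ.prod μ < ⊤) :
    ∃ x, ∫⁻ y, ENNReal.ofReal ((u x - u y) ^ 2) ∂μ < ⊤ := by
  have hmeas : Measurable fun p : α × α => ENNReal.ofReal ((u p.1 - u p.2) ^ 2) := by fun_prop
  rw [lintegral_prod _ hmeas.aemeasurable] at h
  exact (ae_lt_top hmeas.lintegral_prod_right' h.ne).exists

theorem memLp_two_of_lintegral_prod_sq_sub_lt_top [IsFiniteMeasure μ] {u : α → ℝ}
    (hu : Measurable u) (h : ∫⁻ p, ENNReal.ofReal ((u p.1 - u p.2) ^ 2) ∂μ.prod μ < ⊤) :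
    MemLp u 2 μ := by
  rcases eq_zero_or_neZero μ with rfl | _
  · exact memLp_measure_zero
  obtain ⟨x, hx⟩ := exists_lintegral_sq_sub_lt_top hu h
  exact memLp_two_of_lintegral_sq_sub_lt_top hu (u x) hx

end SquareIntegrability

section UnimodalKernel

variable {E : Type*} [SeminormedAddCommGroup E] {f : ℝ → ℝ≥0∞} {c : ℝ≥0} {R : ℝ}

theorem div_le_of_mem_ball_of_almost_antitone
    (hmono : ∀ s r : ℝ, 0 < s → s ≤ r → f r ≤ (c : ℝ≥0∞) * f s) {x y : E}
    (hx : x ∈ ball 0 (R / 2)) (hy : y ∈ ball 0 (R / 2)) (hxy : 0 < ‖x - y‖) :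
    f R / c ≤ f ‖x - y‖ := by
  rw [mem_ball_zero_iff] at hx hy
  refine ENNReal.div_le_of_le_mul' (hmono _ R hxy ?_)
  linarith [norm_sub_le x y]

end UnimodalKernel

section EnergyBound

variable {E : Type*} [NormedAddCommGroup E] [MeasurableSpace E] [OpensMeasurableSpace E]
  {μ : Measure E} [SFinite μ] {f : ℝ → ℝ≥0∞} {c : ℝ≥0} {R : ℝ}

theorem lintegral_restrict_prod_sq_sub_lt_top_of_energy_lt_top {Ω : Set E}
    (hΩR : Ω ⊆ ball 0 (R / 2)) (hmono : ∀ s r : ℝ, 0 < s → s ≤ r → f r ≤ (c : ℝ≥0∞) * f s)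
    (hfR : f R ≠ 0) {u : E → ℝ}
    (hE : ∫⁻ p in (Ωᶜ ×ˢ Ωᶜ)ᶜ, ENNReal.ofReal ((u p.1 - u p.2) ^ 2) * f ‖p.1 - p.2‖ ∂μ.prod μ
      < ⊤) :
    ∫⁻ p, ENNReal.ofReal ((u p.1 - u p.2) ^ 2) ∂(μ.restrict Ω).prod (μ.restrict Ω) < ⊤ := by
  have hkernel : ∀ᵐ p ∂(μ.prod μ).restrict (Ω ×ˢ Ω),
      f R / c * ENNReal.ofReal ((u p.1 - u p.2) ^ 2)
        ≤ ENNReal.ofReal ((u p.1 - u p.2) ^ 2) * f ‖p.1 - p.2‖ := by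
    refine ae_restrict_of_ae_restrict_of_subset (prod_mono hΩR hΩR) ?_
    filter_upwards [ae_restrict_mem (isOpen_ball.measurableSet.prod isOpen_ball.measurableSet)]
      with ⟨x, y⟩ ⟨hx, hy⟩
    rcases eq_or_ne x y with rfl | hxy
    · simp
    rw [mul_comm]
    gcongr
    exact div_le_of_mem_ball_of_almost_antitone hmono hx hy (norm_pos_iff.2 (sub_ne_zero.2 hxy))
  have hbound : f R / c * ∫⁻ p in Ω ×ˢ Ω, ENNReal.ofReal ((u p.1 - u p.2) ^ 2) ∂μ.prod μ < ⊤ :=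
    calc _ ≤ ∫⁻ p in Ω ×ˢ Ω, f R / c * ENNReal.ofReal ((u p.1 - u p.2) ^ 2) ∂μ.prod μ :=
          lintegral_const_mul_le _ _
      _ ≤ ∫⁻ p in Ω ×ˢ Ω, ENNReal.ofReal ((u p.1 - u p.2) ^ 2) * f ‖p.1 - p.2‖ ∂μ.prod μ :=
          lintegral_mono_ae hkernel
      _ ≤ _ := lintegral_mono_set <| by rintro p ⟨hx, -⟩ ⟨hxc, -⟩; exact hxc hx
      _ < ⊤ := hE
  rw [Measure.prod_restrict]
  exact ENNReal.lt_top_of_mul_ne_top_right hbound.ne (ENNReal.div_pos hfR coe_ne_top).ne'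

end EnergyBound

theorem finite_energy_implies_L2_on_Omega_general
    (d : ℕ) (Ω : Set (EuclideanSpace ℝ (Fin d)))
    (R : ℝ) (hΩR : Ω ⊆ ball 0 (R / 2))
    (f : ℝ → ℝ≥0∞) (ν : EuclideanSpace ℝ (Fin d) → ℝ≥0∞)
    (hrad : ∀ h, ν h = f ‖h‖)
    (c : ℝ≥0)
    (hmono : ∀ s r : ℝ, 0 < s → s ≤ r → f r ≤ (c : ℝ≥0∞) * f s)
    (hfR : f R ≠ 0)
    (u : EuclideanSpace ℝ (Fin d) → ℝ) (hu : Measurable u)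
    (hE : ∫⁻ p in (Ωᶜ ×ˢ Ωᶜ)ᶜ, ENNReal.ofReal ((u p.1 - u p.2) ^ 2) * ν (p.1 - p.2)
        ∂(volume.prod volume) < ⊤) :
    MemLp u 2 (volume.restrict Ω) := by
  have : IsFiniteMeasure (volume.restrict Ω) :=
    isFiniteMeasure_restrict.2 ((measure_mono hΩR).trans_lt measure_ball_lt_top).ne
  simp_rw [hrad] at hE
  exact memLp_two_of_lintegral_prod_sq_sub_lt_top hu
    (lintegral_restrict_prod_sq_sub_lt_top_of_energy_lt_top hΩR hmono hfR hE)

/-- for a unimodal Lévy density and a bounded open `Ω ⊆ B_{R/2}(0)`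
with `ν(R) ≠ 0`, finiteness of the energy `E(u,u)` implies `u|_Ω ∈ L²(Ω)`. -/
theorem finite_energy_implies_L2_on_Omega
    (d : ℕ) (Ω : Set (EuclideanSpace ℝ (Fin d)))
    (hΩo : IsOpen Ω) (hΩb : Bornology.IsBounded Ω)
    (R : ℝ) (hR : 1 ≤ R) (hΩR : Ω ⊆ ball 0 (R / 2))
    (f : ℝ → ℝ≥0∞) (ν : EuclideanSpace ℝ (Fin d) → ℝ≥0∞)
    (hmeas : Measurable ν) (hrad : ∀ h, ν h = f ‖h‖)
    (c : ℝ≥0) (hc : 1 ≤ c)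
    (hmono : ∀ s r : ℝ, 0 < s → s ≤ r → f r ≤ (c : ℝ≥0∞) * f s)
    (hlevy : ∫⁻ h, ENNReal.ofReal (min 1 (‖h‖ ^ 2)) * ν h < ⊤)
    (hfR : f R ≠ 0)
    (u : EuclideanSpace ℝ (Fin d) → ℝ) (hu : Measurable u)
    (hE : ∫⁻ p in (Ωᶜ ×ˢ Ωᶜ)ᶜ, ENNReal.ofReal ((u p.1 - u p.2) ^ 2) * ν (p.1 - p.2)
        ∂(volume.prod volume) < ⊤) :
    MemLp u 2 (volume.restrict Ω) :=
  finite_energy_implies_L2_on_Omega_general d Ω R hΩR f ν hrad c hmono hfR u hu hE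
end

section
/- Let Ω ⊂ ℝ^d be open, bounded, and connected with Lipschitz boundary, and let ν(h) = |h|^{−d−α} for fixed α ∈ (0,2), with weight ν̃(h) ≍ (1+|h|)^{−d−α}. Take Ω = B₁(0). Then there exists g ∈ L¹(B₁^c) \ L²(B₁^c, ν̃⁻¹) with ∫_{B₁^c} g = 0 such that the Neumann problem Lu = 0 in B₁, Nu = g on ℝ^d \ B₁ has no weak solution u ∈ V_ν(B₁|ℝ^d); explicitly one may take g = g_γ ν̃ with g_γ(x) = (x₁/|x|)(|x|−1)^γ 1_{B₁^c}(x) for suitable γ. -/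
/-!
With `ν̃(x) = (1 + |x|)^{-d-α}`, take `g = g_γ ν̃` for `γ = 3α/4` and test against
`v_R = g_β 1_{2 ≤ |x| ≤ R}` for `β = α/4`. Since `v_R` vanishes near `B₁` and `2β < α`, the
energies of the `v_R` are bounded independently of `R`. Since `γ + β = α`, `g v_R ≳ |x|^{-d}` on a
cone around the `x₁`-axis, and by the dilation invariance of `|x|^{-d} dx` every dyadic shell of
that cone contributes the same amount, so `∫ g v_R → ∞`. A weak solution `u` would instead give
`∫ g v_R = E(u, v_R) ≤ E(u)^{1/2} E(v_R)^{1/2}`: the domain `(B₁ᶜ × B₁ᶜ)ᶜ` lies in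
`B₁ × ℝ^d ∪ ℝ^d × B₁` and the integrand is symmetric, so Cauchy–Schwarz applies. The same shell
argument with `2γ ≥ α` shows `g ∉ L²(ν̃⁻¹)`, and `∫ g = 0` because `g` is odd.
-/

open MeasureTheory Set Metric ENNReal Pointwise

noncomputable section

section NonlocalForm

variable {X : Type*} [MeasurableSpace X] {μ : Measure X}

/-- The square of the `V_ν(B|ℝ^d)` seminorm, `∫_B ∫ (u x - u y)² k(x, y)`. -/
def nonlocalEnergy (μ : Measure X) (B : Set X) (k : X × X → ℝ) (u : X → ℝ) : ℝ≥0∞ :=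
  ∫⁻ p in B ×ˢ univ, ENNReal.ofReal ((u p.1 - u p.2) ^ 2 * k p) ∂μ.prod μ

lemma ofReal_abs_mul_sqrt_rpow_two {a k : ℝ} (hk : 0 ≤ k) :
    ENNReal.ofReal (|a| * √k) ^ (2 : ℝ) = ENNReal.ofReal (a ^ 2 * k) := by
  rw [ENNReal.rpow_two, ← ENNReal.ofReal_pow (by positivity), mul_pow, sq_abs, Real.sq_sqrt hk]

lemma setLIntegral_prod_univ_le_nonlocalEnergy {B : Set X} {k : X × X → ℝ} {u v : X → ℝ}
    (hu : Measurable u) (hv : Measurable v) (hk : Measurable k) (hk0 : 0 ≤ k) :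
    ∫⁻ p in B ×ˢ univ, ENNReal.ofReal (|u p.1 - u p.2| * |v p.1 - v p.2| * k p) ∂μ.prod μ ≤
      nonlocalEnergy μ B k u ^ (1 / 2 : ℝ) * nonlocalEnergy μ B k v ^ (1 / 2 : ℝ) := by
  let f : (X → ℝ) → X × X → ℝ≥0∞ := fun w p => ENNReal.ofReal (|w p.1 - w p.2| * √(k p))
  have hf : ∀ w, Measurable w → Measurable (f w) := fun w hw =>
    (((hw.comp measurable_fst).sub (hw.comp measurable_snd)).abs.mul hk.sqrt).ennreal_ofReal
  have hfk : ∀ w p, f w p ^ (2 : ℝ) = ENNReal.ofReal ((w p.1 - w p.2) ^ 2 * k p) :=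
    fun w p => ofReal_abs_mul_sqrt_rpow_two (hk0 p)
  have hprod : ∀ p, ENNReal.ofReal (|u p.1 - u p.2| * |v p.1 - v p.2| * k p) = (f u * f v) p := by
    intro p
    simp only [f, Pi.mul_apply, ← ENNReal.ofReal_mul (by positivity : 0 ≤ |u p.1 - u p.2| * √(k p))]
    rw [mul_mul_mul_comm, Real.mul_self_sqrt (hk0 p)]
  simp_rw [hprod]
  convert ENNReal.lintegral_mul_le_Lp_mul_Lq _ Real.HolderConjugate.two_two
    (hf u hu).aemeasurable (hf v hv).aemeasurable using 3 <;> simp only [hfk, nonlocalEnergy]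

lemma setLIntegral_compl_prod_compl_le [SFinite μ] {B : Set X} {F : X × X → ℝ≥0∞}
    (hsymm : ∀ p, F p.swap = F p) :
    ∫⁻ p in (Bᶜ ×ˢ Bᶜ)ᶜ, F p ∂μ.prod μ ≤ 2 * ∫⁻ p in B ×ˢ univ, F p ∂μ.prod μ := by
  have hcover : (Bᶜ ×ˢ Bᶜ)ᶜ ⊆ B ×ˢ univ ∪ univ ×ˢ B := by
    intro p hp
    by_contra h
    simp_all
  have hswap : ∫⁻ p in univ ×ˢ B, F p ∂μ.prod μ = ∫⁻ p in B ×ˢ univ, F p ∂μ.prod μ := by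
    rw [← Measure.prod_restrict, ← Measure.prod_restrict, ← lintegral_prod_swap]
    simp only [hsymm]
  calc ∫⁻ p in (Bᶜ ×ˢ Bᶜ)ᶜ, F p ∂μ.prod μ
      ≤ ∫⁻ p in B ×ˢ univ, F p ∂μ.prod μ + ∫⁻ p in univ ×ˢ B, F p ∂μ.prod μ :=
        (lintegral_mono_set hcover).trans (lintegral_union_le _ _ _)
    _ = 2 * ∫⁻ p in B ×ˢ univ, F p ∂μ.prod μ := by rw [hswap, two_mul]

lemma ofReal_abs_half_integral_le_nonlocalEnergy [SFinite μ] {B : Set X} {k : X × X → ℝ}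
    {u v : X → ℝ}
    (hu : Measurable u) (hv : Measurable v) (hk : Measurable k) (hk0 : 0 ≤ k)
    (hk_symm : ∀ p, k p.swap = k p) :
    ENNReal.ofReal |1 / 2 * ∫ p in (Bᶜ ×ˢ Bᶜ)ᶜ, (u p.1 - u p.2) * (v p.1 - v p.2) * k p ∂μ.prod μ|
      ≤ nonlocalEnergy μ B k u ^ (1 / 2 : ℝ) * nonlocalEnergy μ B k v ^ (1 / 2 : ℝ) := by
  set F : X × X → ℝ≥0∞ := fun p => ENNReal.ofReal (|u p.1 - u p.2| * |v p.1 - v p.2| * k p)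
  have hF_symm : ∀ p, F p.swap = F p := fun p => by
    simp only [F, Prod.fst_swap, Prod.snd_swap, hk_symm, abs_sub_comm (u p.2), abs_sub_comm (v p.2)]
  have hint : ENNReal.ofReal |∫ p in (Bᶜ ×ˢ Bᶜ)ᶜ, (u p.1 - u p.2) * (v p.1 - v p.2) * k p ∂μ.prod μ|
      ≤ ∫⁻ p in (Bᶜ ×ˢ Bᶜ)ᶜ, F p ∂μ.prod μ := by
    rw [← Real.norm_eq_abs, ofReal_norm]
    refine (enorm_integral_le_lintegral_enorm _).trans_eq (lintegral_congr fun p => ?_)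
    rw [Real.enorm_eq_ofReal_abs, abs_mul, abs_mul, abs_of_nonneg (hk0 p)]
  calc _ = ENNReal.ofReal (1 / 2) * ENNReal.ofReal |∫ p in (Bᶜ ×ˢ Bᶜ)ᶜ,
        (u p.1 - u p.2) * (v p.1 - v p.2) * k p ∂μ.prod μ| := by
        rw [abs_mul, ENNReal.ofReal_mul (by positivity), abs_of_pos (by norm_num : (0 : ℝ) < 1 / 2)]
    _ ≤ ENNReal.ofReal (1 / 2) * (2 * ∫⁻ p in B ×ˢ univ, F p ∂μ.prod μ) :=
        mul_le_mul_right (hint.trans (setLIntegral_compl_prod_compl_le hF_symm)) _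
    _ = ∫⁻ p in B ×ˢ univ, F p ∂μ.prod μ := by
        rw [← mul_assoc, ← ENNReal.ofReal_ofNat 2, ← ENNReal.ofReal_mul (by norm_num)]
        norm_num
    _ ≤ _ := setLIntegral_prod_univ_le_nonlocalEnergy hu hv hk hk0

end NonlocalForm

section TestEnergy

variable {E : Type*} [NormedAddCommGroup E] [NormedSpace ℝ E] [FiniteDimensional ℝ E]
  [MeasurableSpace E] [BorelSpace E] (μ : Measure E) [μ.IsAddHaarMeasure]

lemma exists_nonlocalEnergy_le {β κ : ℝ} (hκ : κ ≤ 0)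
    (hβκ : 2 * β + κ < -(Module.finrank ℝ E : ℝ)) :
    ∃ M < ⊤, ∀ v : E → ℝ, (∀ y, ‖y‖ < 2 → v y = 0) → (∀ y, |v y| ≤ (1 + ‖y‖) ^ β) →
      nonlocalEnergy μ (ball 0 1) (fun p => ‖p.1 - p.2‖ ^ κ) v ≤ M := by
  set h : E → ℝ := fun y => 3 ^ (-κ) * (1 + ‖y‖) ^ (2 * β + κ)
  have hint : Integrable h μ := by
    have := (integrable_one_add_norm (μ := μ) (r := -(2 * β + κ)) (by linarith)).const_mul
      ((3 : ℝ) ^ (-κ))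
    simpa only [neg_neg] using this
  refine ⟨μ (ball 0 1) * ∫⁻ y, ENNReal.ofReal (h y) ∂μ,
    ENNReal.mul_lt_top measure_ball_lt_top hint.lintegral_lt_top, fun v hv0 hv => ?_⟩
  have hpt : ∀ p ∈ ball (0 : E) 1 ×ˢ (univ : Set E),
      ENNReal.ofReal ((v p.1 - v p.2) ^ 2 * ‖p.1 - p.2‖ ^ κ) ≤ ENNReal.ofReal (h p.2) := by
    rintro ⟨x, y⟩ ⟨hx, -⟩
    have hx : ‖x‖ < 1 := by simpa using hx
    refine ENNReal.ofReal_le_ofReal ?_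
    dsimp only
    rw [hv0 x (by linarith), zero_sub, neg_sq]
    by_cases hy : ‖y‖ < 2
    · rw [hv0 y hy, sq, zero_mul, zero_mul]; positivity
    push Not at hy
    have hdist : (1 + ‖y‖) / 3 ≤ ‖x - y‖ := by
      have := norm_sub_norm_le y x
      rw [norm_sub_rev] at this
      linarith
    have hsq : v y ^ 2 ≤ (1 + ‖y‖) ^ (2 * β) := by
      rw [mul_comm, Real.rpow_mul (by positivity), Real.rpow_two, ← sq_abs]
      exact pow_le_pow_left₀ (abs_nonneg _) (hv y) 2
    calc v y ^ 2 * ‖x - y‖ ^ κ ≤ (1 + ‖y‖) ^ (2 * β) * ((1 + ‖y‖) / 3) ^ κ :=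
          mul_le_mul hsq (Real.rpow_le_rpow_of_nonpos (by positivity) hdist hκ)
            (by positivity) (by positivity)
      _ = h y := by
          simp only [h, Real.div_rpow (by positivity : (0 : ℝ) ≤ 1 + ‖y‖) zero_le_three,
            Real.rpow_neg zero_le_three, Real.rpow_add (by positivity : (0 : ℝ) < 1 + ‖y‖)]
          ring
  calc nonlocalEnergy μ (ball 0 1) (fun p => ‖p.1 - p.2‖ ^ κ) v
      ≤ ∫⁻ p in ball (0 : E) 1 ×ˢ univ, ENNReal.ofReal (h p.2) ∂μ.prod μ :=
        setLIntegral_mono' (measurableSet_ball.prod MeasurableSet.univ) hpt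
    _ = μ (ball 0 1) * ∫⁻ y, ENNReal.ofReal (h y) ∂μ := by
        rw [← Measure.prod_restrict, Measure.restrict_univ, lintegral_prod _ (by fun_prop)]
        simp [lintegral_const, mul_comm]

end TestEnergy

section DyadicShells

variable {E : Type*} [NormedAddCommGroup E] [NormedSpace ℝ E] {W : Set E} {r : ℝ}

lemma pairwise_disjoint_two_pow_smul (hW : W ⊆ {x | r ≤ ‖x‖ ∧ ‖x‖ < 2 * r}) :
    Pairwise (Function.onFun Disjoint fun k : ℕ => (2 : ℝ) ^ k • W) := by
  have key : ∀ {m n : ℕ}, m < n → Disjoint ((2 : ℝ) ^ m • W) ((2 : ℝ) ^ n • W) := by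
    intro m n hmn
    rw [Set.disjoint_left]
    rintro _ ⟨x, hx, rfl⟩ ⟨y, hy, hxy⟩
    have hnorm := congrArg norm hxy
    simp only [norm_smul, norm_pow, Real.norm_ofNat] at hnorm
    have hr : 0 ≤ r := by linarith [(hW hy).1, (hW hy).2]
    have hmn' : (2 : ℝ) ^ (m + 1) ≤ 2 ^ n := pow_le_pow_right₀ one_le_two hmn
    have hlt : (2 : ℝ) ^ m * ‖x‖ < 2 ^ n * ‖y‖ := calc
      (2 : ℝ) ^ m * ‖x‖ < 2 ^ m * (2 * r) := by gcongr; exact (hW hx).2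
      _ = 2 ^ (m + 1) * r := by ring
      _ ≤ 2 ^ n * ‖y‖ := by gcongr; exact (hW hy).1
    linarith
  intro m n hmn
  rcases hmn.lt_or_gt with h | h
  exacts [key h, (key h).symm]

variable [FiniteDimensional ℝ E] [MeasurableSpace E] [BorelSpace E] (μ : Measure E)
  [μ.IsAddHaarMeasure]

lemma le_setLIntegral_smul_norm_rpow_neg_finrank (hr : 0 < r) (hW : W ⊆ {x | r ≤ ‖x‖ ∧ ‖x‖ < 2 * r})
    {t : ℝ} (ht : 0 < t) :
    ENNReal.ofReal ((2 * r) ^ (-(Module.finrank ℝ E : ℝ))) * μ W ≤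
      ∫⁻ x in t • W, ENNReal.ofReal (‖x‖ ^ (-(Module.finrank ℝ E : ℝ))) ∂μ := by
  set n := Module.finrank ℝ E
  have hbound : ∀ x ∈ t • W, ENNReal.ofReal ((t * (2 * r)) ^ (-(n : ℝ))) ≤
      ENNReal.ofReal (‖x‖ ^ (-(n : ℝ))) := by
    rintro _ ⟨y, hy, rfl⟩
    obtain ⟨hry, hy2r⟩ := hW hy
    refine ENNReal.ofReal_le_ofReal (Real.rpow_le_rpow_of_nonpos ?_ ?_ (by simp))
    · rw [norm_smul, Real.norm_of_nonneg ht.le]; exact mul_pos ht (hr.trans_le hry)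
    · rw [norm_smul, Real.norm_of_nonneg ht.le]; gcongr
  calc ENNReal.ofReal ((2 * r) ^ (-(n : ℝ))) * μ W
      = ENNReal.ofReal ((t * (2 * r)) ^ (-(n : ℝ))) * μ (t • W) := by
        have hscale : (t * (2 * r)) ^ (-(n : ℝ)) * t ^ n = (2 * r) ^ (-(n : ℝ)) := by
          rw [Real.mul_rpow ht.le (by positivity), Real.rpow_neg ht.le, Real.rpow_natCast,
            mul_right_comm, inv_mul_cancel₀ (by positivity), one_mul]
        rw [Measure.addHaar_smul_of_nonneg μ ht.le, ← mul_assoc,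
          ← ENNReal.ofReal_mul (by positivity), hscale]
    _ = ∫⁻ x in t • W, ENNReal.ofReal ((t * (2 * r)) ^ (-(n : ℝ))) ∂μ :=
        (setLIntegral_const _ _).symm
    _ ≤ _ := setLIntegral_mono (by fun_prop) hbound

lemma natCast_mul_le_setLIntegral_norm_rpow_neg_finrank (hr : 0 < r)
    (hW : W ⊆ {x | r ≤ ‖x‖ ∧ ‖x‖ < 2 * r}) (hWm : MeasurableSet W) {S : Set E} {N : ℕ}
    (hS : ∀ k < N, (2 : ℝ) ^ k • W ⊆ S) :
    N * (ENNReal.ofReal ((2 * r) ^ (-(Module.finrank ℝ E : ℝ))) * μ W) ≤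
      ∫⁻ x in S, ENNReal.ofReal (‖x‖ ^ (-(Module.finrank ℝ E : ℝ))) ∂μ := by
  calc (N : ℝ≥0∞) * (ENNReal.ofReal ((2 * r) ^ (-(Module.finrank ℝ E : ℝ))) * μ W)
      = ∑ k ∈ Finset.range N, ENNReal.ofReal ((2 * r) ^ (-(Module.finrank ℝ E : ℝ))) * μ W := by
        simp
    _ ≤ ∑ k ∈ Finset.range N, ∫⁻ x in (2 : ℝ) ^ k • W,
          ENNReal.ofReal (‖x‖ ^ (-(Module.finrank ℝ E : ℝ))) ∂μ :=
        Finset.sum_le_sum fun k _ =>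
          le_setLIntegral_smul_norm_rpow_neg_finrank μ hr hW (by positivity)
    _ = ∫⁻ x in ⋃ k ∈ Finset.range N, (2 : ℝ) ^ k • W,
          ENNReal.ofReal (‖x‖ ^ (-(Module.finrank ℝ E : ℝ))) ∂μ :=
        (lintegral_biUnion_finset ((pairwise_disjoint_two_pow_smul hW).set_pairwise _)
          (fun k _ => hWm.const_smul_of_ne_zero (by positivity)) _).symm
    _ ≤ _ := lintegral_mono_set (iUnion₂_subset fun k hk => hS k (Finset.mem_range.mp hk))

end DyadicShells

section Euclidean

variable {d : ℕ} (i : Fin d)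

/- In the paper's notation, `neumannDatum i γ α = g_γ ν̃`,
`truncatedTest i β R = g_β 1_{2 ≤ |x| ≤ R}` and, for `|x| > 1`,
`pairingDensity i (γ + β) α = g_γ g_β ν̃`, with `x i` in the role of `x₁`. -/
def neumannDatum (γ α : ℝ) (x : EuclideanSpace ℝ (Fin d)) : ℝ :=
  if ‖x‖ ≤ 1 then 0 else x i / ‖x‖ * (‖x‖ - 1) ^ γ * (1 + ‖x‖) ^ (-(d : ℝ) - α)

def truncatedTest (β R : ℝ) (x : EuclideanSpace ℝ (Fin d)) : ℝ :=
  if 2 ≤ ‖x‖ ∧ ‖x‖ ≤ R then x i / ‖x‖ * (‖x‖ - 1) ^ β else 0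

def pairingDensity (δ α : ℝ) (x : EuclideanSpace ℝ (Fin d)) : ℝ :=
  (x i / ‖x‖) ^ 2 * (‖x‖ - 1) ^ δ * (1 + ‖x‖) ^ (-(d : ℝ) - α)

def coneShell : Set (EuclideanSpace ℝ (Fin d)) := {x | 2 ≤ ‖x‖ ∧ ‖x‖ < 4 ∧ ‖x‖ ≤ 2 * |x i|}

lemma abs_div_norm_le_one (x : EuclideanSpace ℝ (Fin d)) : |x i / ‖x‖| ≤ 1 := by
  rw [abs_div, abs_norm]
  exact div_le_one_of_le₀ (PiLp.norm_apply_le x i) (norm_nonneg x)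

lemma measurableSet_coneShell : MeasurableSet (coneShell i) := by
  unfold coneShell
  measurability

lemma volume_coneShell_pos : 0 < volume (coneShell i) := by
  let V : Set (EuclideanSpace ℝ (Fin d)) := {x | 2 < ‖x‖ ∧ ‖x‖ < 4 ∧ ‖x‖ < 2 * x i}
  have hV : IsOpen V := (isOpen_lt continuous_const continuous_norm).inter
    ((isOpen_lt continuous_norm continuous_const).inter (isOpen_lt continuous_norm (by fun_prop)))
  have hVsub : V ⊆ coneShell i := fun x ⟨h1, h2, h3⟩ =>
    ⟨h1.le, h2, h3.le.trans (by gcongr; exact le_abs_self _)⟩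
  have hmem : EuclideanSpace.single i 3 ∈ V := by
    simp only [V, mem_ofPred_eq, PiLp.norm_single, Real.norm_ofNat, PiLp.single_eq_same]
    norm_num
  exact (hV.measure_pos volume ⟨_, hmem⟩).trans_le (measure_mono hVsub)

lemma two_pow_smul_coneShell_subset (k : ℕ) :
    (2 : ℝ) ^ k • coneShell i ⊆ {x | 2 ≤ ‖x‖ ∧ ‖x‖ ≤ 2 ^ (k + 2) ∧ ‖x‖ ≤ 2 * |x i|} := by
  rintro _ ⟨x, ⟨h1, h2, h3⟩, rfl⟩
  have hk : (1 : ℝ) ≤ 2 ^ k := one_le_pow₀ one_le_two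
  simp only [mem_ofPred_eq, norm_smul, norm_pow, Real.norm_ofNat, PiLp.smul_apply, smul_eq_mul,
    abs_mul, abs_pow, abs_two]
  refine ⟨by nlinarith, by rw [pow_add]; nlinarith, by nlinarith⟩

lemma exists_lt_setLIntegral_of_le_mul_norm_rpow {c : ℝ} (hc : 0 < c) {K : ℝ≥0∞} (hK : K ≠ ⊤) :
    ∃ R : ℝ, ∀ F : EuclideanSpace ℝ (Fin d) → ℝ,
      (∀ x, 2 ≤ ‖x‖ → ‖x‖ ≤ R → ‖x‖ ≤ 2 * |x i| → c * ‖x‖ ^ (-(d : ℝ)) ≤ F x) →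
      K < ∫⁻ x in (ball 0 1)ᶜ, ENNReal.ofReal (F x) := by
  have hshell : coneShell i ⊆ {x | 2 ≤ ‖x‖ ∧ ‖x‖ < 2 * 2} := fun x hx =>
    ⟨hx.1, by linarith [hx.2.1]⟩
  set a := ENNReal.ofReal ((2 * 2) ^ (-(d : ℝ))) * volume (coneShell i)
  have ha : ENNReal.ofReal c * a ≠ 0 :=
    mul_ne_zero (ENNReal.ofReal_pos.mpr hc).ne'
      (mul_ne_zero (ENNReal.ofReal_pos.mpr (by positivity)).ne' (volume_coneShell_pos i).ne')
  obtain ⟨N, hN⟩ := ENNReal.exists_nat_mul_gt ha hK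
  set S : Set (EuclideanSpace ℝ (Fin d)) := {x | 2 ≤ ‖x‖ ∧ ‖x‖ ≤ 2 ^ (N + 1) ∧ ‖x‖ ≤ 2 * |x i|}
  have hSm : MeasurableSet S := by measurability
  have hS : S ⊆ (ball 0 1)ᶜ := fun x hx => by
    simp only [mem_compl_iff, mem_ball, dist_zero_right, not_lt]; linarith [hx.1]
  have hshells : ∀ k < N, (2 : ℝ) ^ k • coneShell i ⊆ S := fun k hk =>
    (two_pow_smul_coneShell_subset i k).trans fun x ⟨h1, h2, h3⟩ =>
      ⟨h1, h2.trans (pow_le_pow_right₀ one_le_two (by omega)), h3⟩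
  refine ⟨2 ^ (N + 1), fun F hF => hN.trans_le ?_⟩
  calc N * (ENNReal.ofReal c * a) = ENNReal.ofReal c * (N * a) := by ring
    _ ≤ ENNReal.ofReal c * ∫⁻ x in S, ENNReal.ofReal (‖x‖ ^ (-(d : ℝ))) := by
        gcongr
        simpa only [finrank_euclideanSpace_fin] using
          natCast_mul_le_setLIntegral_norm_rpow_neg_finrank volume (by norm_num) hshell
            (measurableSet_coneShell i) hshells
    _ = ∫⁻ x in S, ENNReal.ofReal (c * ‖x‖ ^ (-(d : ℝ))) := by
        rw [← lintegral_const_mul _ (by fun_prop)]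
        simp_rw [ENNReal.ofReal_mul hc.le]
    _ ≤ ∫⁻ x in S, ENNReal.ofReal (F x) :=
        setLIntegral_mono' hSm fun x hx => ENNReal.ofReal_le_ofReal (hF x hx.1 hx.2.1 hx.2.2)
    _ ≤ _ := lintegral_mono_set hS

lemma pairingDensity_nonneg (δ α : ℝ) {x : EuclideanSpace ℝ (Fin d)} (hx : 1 ≤ ‖x‖) :
    0 ≤ pairingDensity i δ α x := by
  unfold pairingDensity
  have : 0 ≤ ‖x‖ - 1 := by linarith
  positivity

lemma le_pairingDensity {δ α : ℝ} (hα : 0 ≤ α) (hδ : α ≤ δ) {x : EuclideanSpace ℝ (Fin d)}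
    (hx : 2 ≤ ‖x‖) (hxi : ‖x‖ ≤ 2 * |x i|) :
    2 ^ (-(d : ℝ) - 2 * α - 2) * ‖x‖ ^ (-(d : ℝ)) ≤ pairingDensity i δ α x := by
  have hx0 : 0 < ‖x‖ := by linarith
  have hangle : 1 / 4 ≤ (x i / ‖x‖) ^ 2 := by
    rw [div_pow, le_div_iff₀ (by positivity)]
    nlinarith [sq_abs (x i), abs_nonneg (x i)]
  have hradial : (‖x‖ / 2) ^ α ≤ (‖x‖ - 1) ^ δ :=
    (Real.rpow_le_rpow (by positivity) (by linarith) hα).trans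
      (Real.rpow_le_rpow_of_exponent_le (by linarith) hδ)
  have hweight : (2 * ‖x‖) ^ (-(d : ℝ) - α) ≤ (1 + ‖x‖) ^ (-(d : ℝ) - α) :=
    Real.rpow_le_rpow_of_nonpos (by positivity) (by linarith) (by linarith [d.cast_nonneg (α := ℝ)])
  have hconst : 2 ^ (-(d : ℝ) - 2 * α - 2) * ‖x‖ ^ (-(d : ℝ)) =
      1 / 4 * (‖x‖ / 2) ^ α * (2 * ‖x‖) ^ (-(d : ℝ) - α) := by
    have h2 : (2 : ℝ) ^ (-(d : ℝ) - 2 * α - 2) = 1 / 4 * (2 ^ α)⁻¹ * 2 ^ (-(d : ℝ) - α) := by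
      rw [← Real.rpow_neg zero_le_two, show (1 / 4 : ℝ) = 2 ^ (-2 : ℝ) by norm_num,
        ← Real.rpow_add two_pos, ← Real.rpow_add two_pos]
      ring_nf
    have hx : ‖x‖ ^ (-(d : ℝ)) = ‖x‖ ^ α * ‖x‖ ^ (-(d : ℝ) - α) := by
      rw [← Real.rpow_add hx0]; ring_nf
    rw [Real.div_rpow hx0.le zero_le_two, Real.mul_rpow zero_le_two hx0.le, h2, hx]
    field_simp
  rw [hconst]
  unfold pairingDensity
  have hx1 : 0 ≤ ‖x‖ - 1 := by linarith
  gcongr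

lemma neumannDatum_mul_truncatedTest {γ α β R : ℝ} {x : EuclideanSpace ℝ (Fin d)}
    (hx : 2 ≤ ‖x‖) (hxR : ‖x‖ ≤ R) :
    neumannDatum i γ α x * truncatedTest i β R x = pairingDensity i (γ + β) α x := by
  rw [neumannDatum, truncatedTest, if_neg (by linarith), if_pos ⟨hx, hxR⟩, pairingDensity,
    Real.rpow_add (by linarith)]
  ring

lemma neumannDatum_mul_truncatedTest_nonneg (γ α β R : ℝ) (x : EuclideanSpace ℝ (Fin d)) :
    0 ≤ neumannDatum i γ α x * truncatedTest i β R x := by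
  by_cases hx : 2 ≤ ‖x‖ ∧ ‖x‖ ≤ R
  · rw [neumannDatum_mul_truncatedTest i hx.1 hx.2]
    exact pairingDensity_nonneg i _ _ (by linarith [hx.1])
  · simp [truncatedTest, hx]

lemma sq_neumannDatum_mul {γ α : ℝ} {x : EuclideanSpace ℝ (Fin d)} (hx : 1 < ‖x‖) :
    neumannDatum i γ α x ^ 2 * (1 + ‖x‖) ^ ((d : ℝ) + α) = pairingDensity i (2 * γ) α x := by
  have hx1 : 0 < 1 + ‖x‖ := by linarith
  have hweight : ((1 + ‖x‖) ^ (-(d : ℝ) - α)) ^ 2 * (1 + ‖x‖) ^ ((d : ℝ) + α) =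
      (1 + ‖x‖) ^ (-(d : ℝ) - α) := by
    rw [sq, mul_assoc, ← Real.rpow_add hx1, show -(d : ℝ) - α + (d + α) = 0 by ring,
      Real.rpow_zero, mul_one]
  have hradial : ((‖x‖ - 1) ^ γ) ^ 2 = (‖x‖ - 1) ^ (2 * γ) := by
    rw [mul_comm, Real.rpow_mul (by linarith), Real.rpow_two]
  rw [neumannDatum, if_neg hx.not_ge, pairingDensity, ← hradial]
  calc _ = (x i / ‖x‖) ^ 2 * ((‖x‖ - 1) ^ γ) ^ 2 *
        (((1 + ‖x‖) ^ (-(d : ℝ) - α)) ^ 2 * (1 + ‖x‖) ^ ((d : ℝ) + α)) := by ring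
    _ = _ := by rw [hweight]

lemma neumannDatum_neg (γ α : ℝ) (x : EuclideanSpace ℝ (Fin d)) :
    neumannDatum i γ α (-x) = -neumannDatum i γ α x := by
  unfold neumannDatum
  split_ifs <;> simp_all [neg_div]

lemma measurable_neumannDatum (γ α : ℝ) : Measurable (neumannDatum i γ α) :=
  Measurable.ite (measurableSet_le measurable_norm measurable_const) measurable_const
    (by fun_prop)

lemma measurable_truncatedTest (β R : ℝ) : Measurable (truncatedTest i β R) :=
  Measurable.ite ((measurableSet_le measurable_const measurable_norm).inter
    (measurableSet_le measurable_norm measurable_const)) (by fun_prop) measurable_const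

lemma integrable_neumannDatum {γ α : ℝ} (hγ : 0 ≤ γ) (hγα : γ < α) :
    Integrable (neumannDatum i γ α) := by
  have hr : (Module.finrank ℝ (EuclideanSpace ℝ (Fin d)) : ℝ) < d + α - γ := by
    rw [finrank_euclideanSpace_fin]; linarith
  refine (integrable_one_add_norm hr).mono' (measurable_neumannDatum i γ α).aestronglyMeasurable
    (ae_of_all _ fun x => ?_)
  unfold neumannDatum
  split_ifs with hx
  · simp only [norm_zero]; positivity
  have hx1 : 0 ≤ ‖x‖ - 1 := by linarith
  rw [norm_mul, norm_mul, Real.norm_eq_abs, Real.norm_of_nonneg (by positivity),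
    Real.norm_of_nonneg (by positivity), show -(d + α - γ) = γ + (-(d : ℝ) - α) by ring,
    Real.rpow_add (by positivity)]
  gcongr
  exact (mul_le_of_le_one_left (by positivity) (abs_div_norm_le_one i x)).trans
    (Real.rpow_le_rpow hx1 (by linarith) hγ)

lemma setIntegral_neumannDatum_eq_zero (γ α : ℝ) :
    ∫ x in (ball (0 : EuclideanSpace ℝ (Fin d)) 1)ᶜ, neumannDatum i γ α x = 0 := by
  have hsupp : ∀ x ∉ (ball (0 : EuclideanSpace ℝ (Fin d)) 1)ᶜ, neumannDatum i γ α x = 0 :=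
    fun x hx => by simp_all [neumannDatum, le_of_lt]
  have hodd := integral_neg_eq_self (neumannDatum i γ α) volume
  simp only [neumannDatum_neg, integral_neg] at hodd
  rw [setIntegral_eq_integral_of_forall_compl_eq_zero hsupp]
  linarith

lemma truncatedTest_eq_zero_of_norm_lt (β R : ℝ) {x : EuclideanSpace ℝ (Fin d)} (hx : ‖x‖ < 2) :
    truncatedTest i β R x = 0 :=
  if_neg fun h => h.1.not_gt hx

lemma abs_truncatedTest_le {β : ℝ} (hβ : 0 ≤ β) (R : ℝ) (x : EuclideanSpace ℝ (Fin d)) :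
    |truncatedTest i β R x| ≤ (1 + ‖x‖) ^ β := by
  unfold truncatedTest
  split_ifs with hx
  · have hx1 : 0 ≤ ‖x‖ - 1 := by linarith [hx.1]
    rw [abs_mul, abs_of_nonneg (Real.rpow_nonneg hx1 β)]
    exact (mul_le_of_le_one_left (by positivity) (abs_div_norm_le_one i x)).trans
      (Real.rpow_le_rpow hx1 (by linarith) hβ)
  · rw [abs_zero]; positivity

lemma abs_truncatedTest_le_const {β : ℝ} (hβ : 0 ≤ β) (R : ℝ) (x : EuclideanSpace ℝ (Fin d)) :
    |truncatedTest i β R x| ≤ (1 + |R|) ^ β := by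
  by_cases hx : ‖x‖ ≤ R
  · exact (abs_truncatedTest_le i hβ R x).trans
      (Real.rpow_le_rpow (by positivity) (by linarith [le_abs_self R]) hβ)
  · rw [truncatedTest, if_neg fun h => hx h.2, abs_zero]; positivity

lemma exists_lt_setLIntegral_of_pairingDensity_le {δ α : ℝ} (hα : 0 ≤ α) (hδ : α ≤ δ)
    {K : ℝ≥0∞} (hK : K ≠ ⊤) :
    ∃ R : ℝ, ∀ F : EuclideanSpace ℝ (Fin d) → ℝ,
      (∀ x, 2 ≤ ‖x‖ → ‖x‖ ≤ R → pairingDensity i δ α x ≤ F x) →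
      K < ∫⁻ x in (ball 0 1)ᶜ, ENNReal.ofReal (F x) := by
  obtain ⟨R, hR⟩ := exists_lt_setLIntegral_of_le_mul_norm_rpow i
    (c := 2 ^ (-(d : ℝ) - 2 * α - 2)) (by positivity) hK
  exact ⟨R, fun F hF => hR F fun x hx hxR hxi =>
    (le_pairingDensity i hα hδ hx hxi).trans (hF x hx hxR)⟩

lemma lintegral_sq_neumannDatum_mul_eq_top {γ α : ℝ} (hα : 0 ≤ α) (hγ : α ≤ 2 * γ) :
    ∫⁻ x in (ball (0 : EuclideanSpace ℝ (Fin d)) 1)ᶜ,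
      ENNReal.ofReal (neumannDatum i γ α x ^ 2 * (1 + ‖x‖) ^ ((d : ℝ) + α)) = ⊤ := by
  refine ENNReal.eq_top_of_forall_nnreal_le fun K => ?_
  obtain ⟨R, hR⟩ := exists_lt_setLIntegral_of_pairingDensity_le i hα hγ ENNReal.coe_ne_top
  exact (hR _ fun x hx _ => (sq_neumannDatum_mul i (by linarith)).ge).le

lemma exists_lt_ofReal_setIntegral_mul_truncatedTest {γ α β : ℝ} (hγ : 0 ≤ γ)
    (hγα : γ < α) (hβ : 0 ≤ β) (hγβ : α ≤ γ + β) {K : ℝ≥0∞} (hK : K ≠ ⊤) :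
    ∃ R, K < ENNReal.ofReal (∫ x in (ball (0 : EuclideanSpace ℝ (Fin d)) 1)ᶜ,
      neumannDatum i γ α x * truncatedTest i β R x) := by
  obtain ⟨R, hR⟩ := exists_lt_setLIntegral_of_pairingDensity_le i (hγ.trans hγα.le) hγβ hK
  refine ⟨R, ?_⟩
  have hint : Integrable (fun x => neumannDatum i γ α x * truncatedTest i β R x) :=
    (integrable_neumannDatum i hγ hγα).mul_bdd (measurable_truncatedTest i β R).aestronglyMeasurable
      (ae_of_all _ fun x => abs_truncatedTest_le_const i hβ R x)
  rw [ofReal_integral_eq_lintegral_ofReal hint.integrableOn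
    (ae_of_all _ (neumannDatum_mul_truncatedTest_nonneg i γ α β R))]
  exact hR _ fun x hx hxR => (neumannDatum_mul_truncatedTest i hx hxR).ge

lemma exists_nonlocalEnergy_truncatedTest_le {α β : ℝ} (hβ : 0 ≤ β) (hβα : 2 * β < α) :
    ∃ M < ⊤, ∀ R, nonlocalEnergy volume (ball 0 1)
      (fun p => ‖p.1 - p.2‖ ^ (-(d : ℝ) - α)) (truncatedTest i β R) ≤ M := by
  obtain ⟨M, hM, hEv⟩ := exists_nonlocalEnergy_le (volume : Measure (EuclideanSpace ℝ (Fin d)))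
    (β := β) (κ := -(d : ℝ) - α) (by linarith [d.cast_nonneg (α := ℝ)])
    (by rw [finrank_euclideanSpace_fin]; linarith)
  exact ⟨M, hM, fun R => hEv _ (fun _ => truncatedTest_eq_zero_of_norm_lt i _ _)
    (abs_truncatedTest_le i hβ R)⟩

lemma memLp_truncatedTest (β R : ℝ) :
    MemLp (truncatedTest i β R) 2 (volume.restrict (ball (0 : EuclideanSpace ℝ (Fin d)) 1)) :=
  MemLp.zero.ae_eq (ae_restrict_of_forall_mem measurableSet_ball fun x hx =>
    (truncatedTest_eq_zero_of_norm_lt i β R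
      (by rw [mem_ball, dist_zero_right] at hx; linarith)).symm)

end Euclidean

end

/-- non-existence of weak solutions for the fractional Neumann
problem on the unit ball: with `ν(h) = |h|^{−d−α}` and weight
`ν̃(h) = (1+|h|)^{−d−α}`, there is `g ∈ L¹(B₁^c) \ L²(B₁^c, ν̃⁻¹)` with
`∫_{B₁^c} g = 0` (explicitly `g(x) = (x₁/|x|)(|x|−1)^γ (1+|x|)^{−d−α}` outside
`B₁` for a suitable `γ`) such that the variational Neumann problem `Lu = 0` in
`B₁`, `Nu = g` on `ℝ^d \ B₁` has no weak solution in `V_ν(B₁|ℝ^d)`. -/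
theorem neumann_nonexistence_fractional
    (d : ℕ) (hd : 0 < d) (α : ℝ) (hα : α ∈ Set.Ioo (0 : ℝ) 2) :
    ∃ g : EuclideanSpace ℝ (Fin d) → ℝ,
      (∃ γ : ℝ, ∀ x : EuclideanSpace ℝ (Fin d),
        g x = if ‖x‖ ≤ 1 then 0
          else (x ⟨0, hd⟩ / ‖x‖) * (‖x‖ - 1) ^ γ * (1 + ‖x‖) ^ (-(d : ℝ) - α)) ∧
      IntegrableOn g (ball (0 : EuclideanSpace ℝ (Fin d)) 1)ᶜ ∧
      ¬ (∫⁻ x in (ball (0 : EuclideanSpace ℝ (Fin d)) 1)ᶜ,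
          ENNReal.ofReal ((g x) ^ 2 * (1 + ‖x‖) ^ ((d : ℝ) + α)) < ⊤) ∧
      (∫ x in (ball (0 : EuclideanSpace ℝ (Fin d)) 1)ᶜ, g x) = 0 ∧
      ¬ ∃ u : EuclideanSpace ℝ (Fin d) → ℝ, Measurable u ∧
          MemLp u 2 (volume.restrict (ball (0 : EuclideanSpace ℝ (Fin d)) 1)) ∧
          (∫⁻ p in (ball (0 : EuclideanSpace ℝ (Fin d)) 1) ×ˢ univ,
              ENNReal.ofReal ((u p.1 - u p.2) ^ 2 * ‖p.1 - p.2‖ ^ (-(d : ℝ) - α))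
              ∂(volume.prod volume)) < ⊤ ∧
          ∀ v : EuclideanSpace ℝ (Fin d) → ℝ, Measurable v →
            MemLp v 2 (volume.restrict (ball (0 : EuclideanSpace ℝ (Fin d)) 1)) →
            (∫⁻ p in (ball (0 : EuclideanSpace ℝ (Fin d)) 1) ×ˢ univ,
                ENNReal.ofReal ((v p.1 - v p.2) ^ 2 * ‖p.1 - p.2‖ ^ (-(d : ℝ) - α))
                ∂(volume.prod volume)) < ⊤ →
            (1 / 2) * (∫ p in (((ball (0 : EuclideanSpace ℝ (Fin d)) 1)ᶜ ×ˢ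
                  (ball (0 : EuclideanSpace ℝ (Fin d)) 1)ᶜ))ᶜ,
                (u p.1 - u p.2) * (v p.1 - v p.2) * ‖p.1 - p.2‖ ^ (-(d : ℝ) - α)
                ∂(volume.prod volume))
              = ∫ x in (ball (0 : EuclideanSpace ℝ (Fin d)) 1)ᶜ, g x * v x := by
  obtain ⟨hα0, hα2⟩ := hα
  set i : Fin d := ⟨0, hd⟩
  refine ⟨neumannDatum i (3 * α / 4) α, ⟨3 * α / 4, fun x => rfl⟩,
    (integrable_neumannDatum i (by positivity) (by linarith)).integrableOn,
    fun h => h.ne (lintegral_sq_neumannDatum_mul_eq_top i hα0.le (by linarith)),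
    setIntegral_neumannDatum_eq_zero i _ _, ?_⟩
  rintro ⟨u, hu, -, hEu, hweak⟩
  set k : EuclideanSpace ℝ (Fin d) × EuclideanSpace ℝ (Fin d) → ℝ :=
    fun p => ‖p.1 - p.2‖ ^ (-(d : ℝ) - α)
  obtain ⟨M, hM, hEv⟩ := exists_nonlocalEnergy_truncatedTest_le i (α := α) (β := α / 4)
    (by positivity) (by linarith)
  obtain ⟨R, hR⟩ := exists_lt_ofReal_setIntegral_mul_truncatedTest i
    (γ := 3 * α / 4) (α := α) (β := α / 4) (by positivity) (by linarith) (by positivity)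
    (by linarith)
    (K := nonlocalEnergy volume (ball 0 1) k u ^ (1 / 2 : ℝ) * M ^ (1 / 2 : ℝ))
    (mul_ne_top (rpow_ne_top_of_nonneg (by norm_num) hEu.ne)
      (rpow_ne_top_of_nonneg (by norm_num) hM.ne))
  set v := truncatedTest i (α / 4) R
  refine hR.not_ge ?_
  rw [← hweak v (measurable_truncatedTest i _ _) (memLp_truncatedTest i _ _) ((hEv R).trans_lt hM)]
  calc _ ≤ _ := ENNReal.ofReal_le_ofReal (le_abs_self _)
    _ ≤ nonlocalEnergy volume (ball 0 1) k u ^ (1 / 2 : ℝ) *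
          nonlocalEnergy volume (ball 0 1) k v ^ (1 / 2 : ℝ) :=
      ofReal_abs_half_integral_le_nonlocalEnergy hu (measurable_truncatedTest i _ _) (by fun_prop)
        (fun p => Real.rpow_nonneg (norm_nonneg _) _) (fun p => by simp [k, norm_sub_rev])
    _ ≤ _ := by gcongr; exact hEv R
end
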